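/- Let G_V be the quotient of G_BV by the normal closure of {σ_i^2 : i ≥ 1} ∪ {τ_i^2 : i ≥ 1}, and let H_V be the presented group obtained from H by adding the two relators σ_1^2 = 1 and τ_1^2 = 1. Then there is a group isomorphism from H_V to G_V sending x_0 ↦ x_0, x_1 ↦ x_1, σ_1 ↦ σ_1, and τ_1 ↦ τ_1. (Hence Thompson's group V admits a presentation with 4 generators and 20 relators.) -/

import Mathlib

/-- Relator corresponding to the equation `u = v`. -/
def grel {α : Type*} (u v : FreeGroup α) : FreeGroup α := u * v⁻¹

/-- Generators of the braided Thompson group `BV`.  `s i` denotes `σ_{i+1}` and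
`t i` denotes `τ_{i+1}` (so that exactly the generators `σ_i, τ_i` with `i ≥ 1` occur). -/
inductive BVGen : Type
  | x : ℕ → BVGen
  | s : ℕ → BVGen
  | t : ℕ → BVGen

namespace BVGen

/-- The free-group letter `x_i`. -/
def X (i : ℕ) : FreeGroup BVGen := FreeGroup.of (BVGen.x i)

/-- The free-group letter `σ_i` (meaningful for `i ≥ 1`). -/
def S (i : ℕ) : FreeGroup BVGen := FreeGroup.of (BVGen.s (i - 1))

/-- The free-group letter `τ_i` (meaningful for `i ≥ 1`). -/
def T (i : ℕ) : FreeGroup BVGen := FreeGroup.of (BVGen.t (i - 1))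

/-- The defining relations of the braided Thompson group `BV`. -/
def bvRels : Set (FreeGroup BVGen) :=
  { g |
    (∃ i j, i < j ∧ g = grel (X j * X i) (X i * X (j + 1))) ∨
    (∃ i j, 1 ≤ i ∧ i + 2 ≤ j ∧ g = grel (S i * S j) (S j * S i)) ∨
    (∃ i, 1 ≤ i ∧ g = grel (S i * S (i + 1) * S i) (S (i + 1) * S i * S (i + 1))) ∨
    (∃ i j, 1 ≤ i ∧ i + 2 ≤ j ∧ g = grel (S i * T j) (T j * S i)) ∨
    (∃ i, 1 ≤ i ∧ g = grel (S i * T (i + 1) * S i) (T (i + 1) * S i * T (i + 1))) ∨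
    (∃ i j, 1 ≤ i ∧ i < j ∧ g = grel (S i * X j) (X j * S i)) ∨
    (∃ i, 1 ≤ i ∧ g = grel (S i * X i) (X (i - 1) * S (i + 1) * S i)) ∨
    (∃ i j, j + 2 ≤ i ∧ g = grel (S i * X j) (X j * S (i + 1))) ∨
    (∃ i, g = grel (S (i + 1) * X i) (X (i + 1) * S (i + 1) * S (i + 2))) ∨
    (∃ i j, j + 2 ≤ i ∧ g = grel (T i * X j) (X j * T (i + 1))) ∨
    (∃ i, 1 ≤ i ∧ g = grel (T i * X (i - 1)) (S i * T (i + 1))) ∨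
    (∃ i, 1 ≤ i ∧ g = grel (T i) (X (i - 1) * T (i + 1) * S i)) }

end BVGen

/-- The braided Thompson group `BV`, given by its infinite presentation. -/
abbrev GBV : Type := PresentedGroup BVGen.bvRels

namespace GBV

/-- The generator `x_i` of `BV`. -/
def xg (i : ℕ) : GBV := PresentedGroup.of (BVGen.x i)

/-- The generator `σ_i` of `BV` (meaningful for `i ≥ 1`). -/
def sg (i : ℕ) : GBV := PresentedGroup.of (BVGen.s (i - 1))

/-- The generator `τ_i` of `BV` (meaningful for `i ≥ 1`). -/
def tg (i : ℕ) : GBV := PresentedGroup.of (BVGen.t (i - 1))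

/-- H_n: the subgroup of `BV` generated by the B_n generators
`σ_1, …, σ_{n-2}, τ_{n-1}`. -/
def Hn (n : ℕ) : Subgroup GBV :=
  Subgroup.closure ({g | ∃ i, 1 ≤ i ∧ i + 2 ≤ n ∧ g = sg i} ∪ {tg (n - 1)})

end GBV

/-- The four generators of the finite presentation `H` of `BV`. -/
inductive HGen : Type
  | x0 | x1 | s1 | t1

/-- The abbreviations `x_i` in the free group on the four generators:
`x_{i+2} = x_i⁻¹ x_{i+1} x_i`. -/
def xH : ℕ → FreeGroup HGen
  | 0 => FreeGroup.of HGen.x0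
  | 1 => FreeGroup.of HGen.x1
  | (i + 2) => (xH i)⁻¹ * xH (i + 1) * xH i

/-- The abbreviations `σ_i` (meaningful for `i ≥ 1`):
`σ_{i+1} = x_{i-1}⁻¹ σ_i x_i σ_i⁻¹`. -/
def sH : ℕ → FreeGroup HGen
  | 0 => 1
  | 1 => FreeGroup.of HGen.s1
  | (i + 2) => (xH i)⁻¹ * sH (i + 1) * xH (i + 1) * (sH (i + 1))⁻¹

/-- The abbreviations `τ_i` (meaningful for `i ≥ 1`):
`τ_{i+1} = x_{i-1}⁻¹ τ_i σ_i⁻¹`. -/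
def tH : ℕ → FreeGroup HGen
  | 0 => 1
  | 1 => FreeGroup.of HGen.t1
  | (i + 2) => (xH i)⁻¹ * tH (i + 1) * (sH (i + 1))⁻¹

/-- The 18 defining relators of `H`. -/
def hRels : Set (FreeGroup HGen) :=
  { grel (xH 2 * xH 0) (xH 0 * xH 3),
    grel (xH 3 * xH 1) (xH 1 * xH 4),
    grel (sH 1 * xH 2) (xH 2 * sH 1),
    grel (sH 1 * xH 3) (xH 3 * sH 1),
    grel (sH 2 * xH 3) (xH 3 * sH 2),
    grel (sH 2 * xH 4) (xH 4 * sH 2),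
    grel (sH 2 * xH 0) (xH 0 * sH 3),
    grel (sH 3 * xH 1) (xH 1 * sH 4),
    grel (sH 1 * xH 0) (xH 1 * sH 1 * sH 2),
    grel (sH 2 * xH 1) (xH 2 * sH 2 * sH 3),
    grel (tH 2 * xH 0) (xH 0 * tH 3),
    grel (tH 3 * xH 1) (xH 1 * tH 4),
    grel (tH 1 * xH 0) (sH 1 * tH 2),
    grel (tH 2 * xH 1) (sH 2 * tH 3),
    grel (sH 1 * sH 3) (sH 3 * sH 1),
    grel (sH 1 * sH 2 * sH 1) (sH 2 * sH 1 * sH 2),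
    grel (sH 1 * tH 3) (tH 3 * sH 1),
    grel (sH 1 * tH 2 * sH 1) (tH 2 * sH 1 * tH 2) }

/-- The finitely presented group `H` (4 generators, 18 relators). -/
abbrev HGrp : Type := PresentedGroup hRels

/-- The normal closure of `{σ_i² : i ≥ 1} ∪ {τ_i² : i ≥ 1}` in `BV`. -/
def vRelsCl : Subgroup GBV :=
  Subgroup.normalClosure {g | ∃ i, 1 ≤ i ∧ (g = GBV.sg i ^ 2 ∨ g = GBV.tg i ^ 2)}

instance : vRelsCl.Normal := Subgroup.normalClosure_normal

/-- Thompson's group `V`, as the quotient of `BV` by the normal closure of the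
squares of the `σ_i` and `τ_i`. -/
abbrev GV : Type := GBV ⧸ vRelsCl

/-- The presentation of Thompson's group `V` obtained from `H` by adding the
relators `σ₁² = 1` and `τ₁² = 1` (4 generators, 20 relators). -/
abbrev HV : Type := PresentedGroup (hRels ∪ {sH 1 ^ 2, tH 1 ^ 2})

/-!
The isomorphism and its inverse send generators to generators.

`H_V → G_V`: in `BV` the abbreviations `x_i`, `σ_i`, `τ_i` of `H` evaluate to the generators of
the same name, because their recursive definitions are instances of (A), (C2) and (D3); every
relator of `H` is then an instance of a defining relation of `BV`.

`G_V → H_V`: every defining relation of `BV`, and `σ_i² = τ_i² = 1`, must be derived in `H_V`.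
If `a` semiconjugates `x_k, x_{k+1}` (and `σ_{k+1}`, `τ_{k+1}`) to the letters of indices
`l, l+1`, the recursive definitions show that it semiconjugates `x_{k+2}` (and `σ_{k+2}`,
`τ_{k+2}`) to the letter of index `l+2`. This settles, from two instances each, the relations in
which `x₀`, `x₁`, `σ₁` or `σ₂` acts on letters of arbitrary index. Conjugation by `x₀` raises the
index of `x_i` (`i ≥ 1`) and of `σ_i`, `τ_i` (`i ≥ 2`), and so carries these to all other
indices. The starting instances are relators of `H`, except `σ₂² = τ₂² = 1`, the commutation of
`σ₂` with `σ₄` and `τ₄`, and the braid relations of `σ₂` with `σ₃` and `τ₃`: these are short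
computations that use `σ₁² = τ₁² = 1`.
-/

theorem inv_eq_self_of_sq_eq_one {G : Type*} [Group G] {g : G} (h : g ^ 2 = 1) : g⁻¹ = g :=
  inv_eq_of_mul_eq_one_right ((sq g).symm.trans h)

theorem mul_mul_eq_mul_mul {M : Type*} [Semigroup M] {a b c d : M} (h : a * b = c * d) (t : M) :
    a * (b * t) = c * (d * t) := by
  rw [← mul_assoc, h, mul_assoc]

namespace GBV

theorem eq_of_grel_mem {u v : FreeGroup BVGen} (h : grel u v ∈ BVGen.bvRels) :
    PresentedGroup.mk BVGen.bvRels u = PresentedGroup.mk BVGen.bvRels v :=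
  PresentedGroup.mk_eq_mk_of_mul_inv_mem h

theorem relA {i j : ℕ} (h : i < j) : xg j * xg i = xg i * xg (j + 1) :=
  eq_of_grel_mem (.inl ⟨i, j, h, rfl⟩)

theorem relB1 {i j : ℕ} (h₁ : 1 ≤ i) (h₂ : i + 2 ≤ j) : sg i * sg j = sg j * sg i :=
  eq_of_grel_mem (.inr <| .inl ⟨i, j, h₁, h₂, rfl⟩)

theorem relB2 {i : ℕ} (h : 1 ≤ i) :
    sg i * sg (i + 1) * sg i = sg (i + 1) * sg i * sg (i + 1) :=
  eq_of_grel_mem (.inr <| .inr <| .inl ⟨i, h, rfl⟩)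

theorem relB3 {i j : ℕ} (h₁ : 1 ≤ i) (h₂ : i + 2 ≤ j) : sg i * tg j = tg j * sg i :=
  eq_of_grel_mem (.inr <| .inr <| .inr <| .inl ⟨i, j, h₁, h₂, rfl⟩)

theorem relB4 {i : ℕ} (h : 1 ≤ i) :
    sg i * tg (i + 1) * sg i = tg (i + 1) * sg i * tg (i + 1) :=
  eq_of_grel_mem (.inr <| .inr <| .inr <| .inr <| .inl ⟨i, h, rfl⟩)

theorem relC1 {i j : ℕ} (h₁ : 1 ≤ i) (h₂ : i < j) : sg i * xg j = xg j * sg i :=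
  eq_of_grel_mem (.inr <| .inr <| .inr <| .inr <| .inr <| .inl ⟨i, j, h₁, h₂, rfl⟩)

theorem relC2 {i : ℕ} (h : 1 ≤ i) : sg i * xg i = xg (i - 1) * sg (i + 1) * sg i :=
  eq_of_grel_mem (.inr <| .inr <| .inr <| .inr <| .inr <| .inr <| .inl ⟨i, h, rfl⟩)

theorem relC3 {i j : ℕ} (h : j + 2 ≤ i) : sg i * xg j = xg j * sg (i + 1) :=
  eq_of_grel_mem (.inr <| .inr <| .inr <| .inr <| .inr <| .inr <| .inr <| .inl ⟨i, j, h, rfl⟩)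

theorem relC4 (i : ℕ) : sg (i + 1) * xg i = xg (i + 1) * sg (i + 1) * sg (i + 2) :=
  eq_of_grel_mem (.inr <| .inr <| .inr <| .inr <| .inr <| .inr <| .inr <| .inr <| .inl ⟨i, rfl⟩)

theorem relD1 {i j : ℕ} (h : j + 2 ≤ i) : tg i * xg j = xg j * tg (i + 1) :=
  eq_of_grel_mem (.inr <| .inr <| .inr <| .inr <| .inr <| .inr <| .inr <| .inr <| .inr <|
    .inl ⟨i, j, h, rfl⟩)

theorem relD2 {i : ℕ} (h : 1 ≤ i) : tg i * xg (i - 1) = sg i * tg (i + 1) :=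
  eq_of_grel_mem (.inr <| .inr <| .inr <| .inr <| .inr <| .inr <| .inr <| .inr <| .inr <| .inr <|
    .inl ⟨i, h, rfl⟩)

theorem relD3 {i : ℕ} (h : 1 ≤ i) : tg i = xg (i - 1) * tg (i + 1) * sg i :=
  eq_of_grel_mem (.inr <| .inr <| .inr <| .inr <| .inr <| .inr <| .inr <| .inr <| .inr <| .inr <|
    .inr ⟨i, h, rfl⟩)

def evalH : FreeGroup HGen →* GBV := FreeGroup.lift fun
  | .x0 => xg 0
  | .x1 => xg 1
  | .s1 => sg 1
  | .t1 => tg 1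

theorem evalH_xH : ∀ i, evalH (xH i) = xg i
  | 0 => rfl
  | 1 => rfl
  | i + 2 => by
    rw [xH, map_mul, map_mul, map_inv, evalH_xH i, evalH_xH (i + 1), mul_assoc,
      relA (Nat.lt_succ_self i)]
    group

theorem evalH_sH : ∀ i, evalH (sH (i + 1)) = sg (i + 1)
  | 0 => rfl
  | i + 1 => by
    have h := relC2 (Nat.le_add_left 1 i)
    rw [Nat.add_sub_cancel] at h
    rw [sH, map_mul, map_mul, map_mul, map_inv, map_inv, evalH_xH, evalH_xH, evalH_sH i,
      mul_assoc _ (sg (i + 1)), h]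
    group

theorem evalH_tH : ∀ i, evalH (tH (i + 1)) = tg (i + 1)
  | 0 => rfl
  | i + 1 => by
    have h := relD3 (Nat.le_add_left 1 i)
    rw [Nat.add_sub_cancel] at h
    rw [tH, map_mul, map_mul, map_inv, map_inv, evalH_xH, evalH_sH, evalH_tH i, h]
    group

theorem evalH_hRels : ∀ r ∈ hRels, evalH r = 1 := by
  simp only [hRels, Set.mem_insert_iff, Set.mem_singleton_iff]
  rintro r (rfl | rfl | rfl | rfl | rfl | rfl | rfl | rfl | rfl | rfl | rfl | rfl | rfl | rfl |
    rfl | rfl | rfl | rfl) <;>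
  simp only [grel, map_mul, map_inv, mul_inv_eq_one, evalH_xH, evalH_sH, evalH_tH]
  exacts [relA (by norm_num), relA (by norm_num), relC1 le_rfl (by norm_num),
    relC1 le_rfl (by norm_num), relC1 (by norm_num) (by norm_num),
    relC1 (by norm_num) (by norm_num), relC3 le_rfl, relC3 le_rfl, relC4 0, relC4 1,
    relD1 le_rfl, relD1 le_rfl, relD2 le_rfl, relD2 (by norm_num), relB1 le_rfl le_rfl,
    relB2 le_rfl, relB3 le_rfl le_rfl, relB4 le_rfl]

theorem sg_sq_mem {i : ℕ} (h : 1 ≤ i) : sg i ^ 2 ∈ vRelsCl :=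
  Subgroup.subset_normalClosure ⟨i, h, .inl rfl⟩

theorem tg_sq_mem {i : ℕ} (h : 1 ≤ i) : tg i ^ 2 ∈ vRelsCl :=
  Subgroup.subset_normalClosure ⟨i, h, .inr rfl⟩

end GBV

namespace HV

def mk : FreeGroup HGen →* HV := PresentedGroup.mk _

def X (i : ℕ) : HV := mk (xH i)

def S (i : ℕ) : HV := mk (sH i)

def T (i : ℕ) : HV := mk (tH i)

theorem X_add_two (i : ℕ) : X (i + 2) = (X i)⁻¹ * X (i + 1) * X i := rfl

theorem S_add_two (i : ℕ) : S (i + 2) = (X i)⁻¹ * S (i + 1) * X (i + 1) * (S (i + 1))⁻¹ := rfl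

theorem T_add_two (i : ℕ) : T (i + 2) = (X i)⁻¹ * T (i + 1) * (S (i + 1))⁻¹ := rfl

theorem eq_of_grel_mem {u v : FreeGroup HGen} (h : grel u v ∈ hRels) : mk u = mk v :=
  PresentedGroup.mk_eq_mk_of_mul_inv_mem (Set.mem_union_left _ h)

/- The relators of `H`, named after the relation of `BV` they instantiate and its indices:
`relC3_2_0` is (C3) for `i = 2`, `j = 0`. -/
theorem relA_0_2 : SemiconjBy (X 0) (X 3) (X 2) := (eq_of_grel_mem (by simp [hRels])).symm
theorem relA_1_3 : SemiconjBy (X 1) (X 4) (X 3) := (eq_of_grel_mem (by simp [hRels])).symm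
theorem relC1_1_2 : Commute (S 1) (X 2) := eq_of_grel_mem (by simp [hRels])
theorem relC1_1_3 : Commute (S 1) (X 3) := eq_of_grel_mem (by simp [hRels])
theorem relC1_2_3 : Commute (S 2) (X 3) := eq_of_grel_mem (by simp [hRels])
theorem relC1_2_4 : Commute (S 2) (X 4) := eq_of_grel_mem (by simp [hRels])
theorem relC3_2_0 : SemiconjBy (X 0) (S 3) (S 2) := (eq_of_grel_mem (by simp [hRels])).symm
theorem relC3_3_1 : SemiconjBy (X 1) (S 4) (S 3) := (eq_of_grel_mem (by simp [hRels])).symm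
theorem relC4_0 : S 1 * X 0 = X 1 * S 1 * S 2 := eq_of_grel_mem (by simp [hRels])
theorem relC4_1 : S 2 * X 1 = X 2 * S 2 * S 3 := eq_of_grel_mem (by simp [hRels])
theorem relD1_2_0 : SemiconjBy (X 0) (T 3) (T 2) := (eq_of_grel_mem (by simp [hRels])).symm
theorem relD1_3_1 : SemiconjBy (X 1) (T 4) (T 3) := (eq_of_grel_mem (by simp [hRels])).symm
theorem relD2_1 : T 1 * X 0 = S 1 * T 2 := eq_of_grel_mem (by simp [hRels])
theorem relD2_2 : T 2 * X 1 = S 2 * T 3 := eq_of_grel_mem (by simp [hRels])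
theorem relB1_1_3 : Commute (S 1) (S 3) := eq_of_grel_mem (by simp [hRels])
theorem relB2_1 : S 1 * S 2 * S 1 = S 2 * S 1 * S 2 := eq_of_grel_mem (by simp [hRels])
theorem relB3_1_3 : Commute (S 1) (T 3) := eq_of_grel_mem (by simp [hRels])
theorem relB4_1 : S 1 * T 2 * S 1 = T 2 * S 1 * T 2 := eq_of_grel_mem (by simp [hRels])

theorem sq_S_one : S 1 ^ 2 = 1 := PresentedGroup.one_of_mem (by simp)
theorem sq_T_one : T 1 ^ 2 = 1 := PresentedGroup.one_of_mem (by simp)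

section Step

variable {a : HV} {k l : ℕ}

theorem semiconjBy_X_add_two (h₀ : SemiconjBy a (X k) (X l))
    (h₁ : SemiconjBy a (X (k + 1)) (X (l + 1))) : SemiconjBy a (X (k + 2)) (X (l + 2)) := by
  rw [X_add_two, X_add_two]
  exact (h₀.inv_right.mul_right h₁).mul_right h₀

theorem semiconjBy_S_add_two (h₀ : SemiconjBy a (X k) (X l))
    (h₁ : SemiconjBy a (X (k + 1)) (X (l + 1))) (hS : SemiconjBy a (S (k + 1)) (S (l + 1))) :
    SemiconjBy a (S (k + 2)) (S (l + 2)) := by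
  rw [S_add_two, S_add_two]
  exact ((h₀.inv_right.mul_right hS).mul_right h₁).mul_right hS.inv_right

theorem semiconjBy_T_add_two (h₀ : SemiconjBy a (X k) (X l))
    (hS : SemiconjBy a (S (k + 1)) (S (l + 1))) (hT : SemiconjBy a (T (k + 1)) (T (l + 1))) :
    SemiconjBy a (T (k + 2)) (T (l + 2)) := by
  rw [T_add_two, T_add_two]
  exact (h₀.inv_right.mul_right hT).mul_right hS.inv_right

end Step

theorem relA_zero : ∀ m, SemiconjBy (X 0) (X (m + 2)) (X (m + 1))
  | 0 => by rw [SemiconjBy, X_add_two]; group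
  | 1 => relA_0_2
  | m + 2 => semiconjBy_X_add_two (relA_zero m) (relA_zero (m + 1))

theorem relC3_zero : ∀ m, SemiconjBy (X 0) (S (m + 3)) (S (m + 2))
  | 0 => relC3_2_0
  | m + 1 => semiconjBy_S_add_two (relA_zero m) (relA_zero (m + 1)) (relC3_zero m)

theorem relD1_zero : ∀ m, SemiconjBy (X 0) (T (m + 3)) (T (m + 2))
  | 0 => relD1_2_0
  | m + 1 => semiconjBy_T_add_two (relA_zero m) (relC3_zero m) (relD1_zero m)

def shift : HV ≃* HV := MulAut.conj (X 0)⁻¹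

theorem shift_eq_of_semiconjBy {x y : HV} (h : SemiconjBy (X 0) y x) : shift x = y := by
  rw [shift, MulAut.conj_apply, inv_inv, mul_assoc, ← h.eq, inv_mul_cancel_left]

theorem shift_X (n : ℕ) : shift (X (n + 1)) = X (n + 2) := shift_eq_of_semiconjBy (relA_zero n)
theorem shift_S (n : ℕ) : shift (S (n + 2)) = S (n + 3) := shift_eq_of_semiconjBy (relC3_zero n)
theorem shift_T (n : ℕ) : shift (T (n + 2)) = T (n + 3) := shift_eq_of_semiconjBy (relD1_zero n)

/- The families are indexed so that no side conditions are needed: `relA i m` is relation (A)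
for `j = i + m + 1`, `relC3 j m` is (C3) for `i = j + m + 2`, and so on. -/
theorem relA : ∀ i m, SemiconjBy (X i) (X (m + i + 2)) (X (m + i + 1))
  | 0, m => relA_zero m
  | 1, 0 => by rw [SemiconjBy, X_add_two 1]; group
  | 1, 1 => relA_1_3
  | 1, m + 2 => semiconjBy_X_add_two (relA 1 m) (relA 1 (m + 1))
  | i + 2, m => by
    have h := (relA (i + 1) m).map shift
    simp only [shift_X] at h
    exact h

theorem S_two_eq : S 2 = (X 0)⁻¹ * S 1 * X 1 * S 1 := by
  rw [S_add_two 0, inv_eq_self_of_sq_eq_one sq_S_one]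

theorem sq_S_two : S 2 ^ 2 = 1 := by
  have h : (S 2)⁻¹ = (X 0)⁻¹ * (S 1)⁻¹ * X 1 * S 1 := by
    rw [show S 2 = (X 1 * S 1)⁻¹ * (S 1 * X 0) by rw [relC4_0]; group]; group
  rw [sq, mul_eq_one_iff_eq_inv, h, inv_eq_self_of_sq_eq_one sq_S_one, S_two_eq]

theorem sq_T_two : T 2 ^ 2 = 1 := by
  have h : (T 2)⁻¹ = (X 0)⁻¹ * (T 1)⁻¹ * S 1 := by
    rw [show T 2 = (S 1)⁻¹ * (T 1 * X 0) by rw [relD2_1]; group]; group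
  rw [sq, mul_eq_one_iff_eq_inv, h, T_add_two 0, inv_eq_self_of_sq_eq_one sq_S_one,
    inv_eq_self_of_sq_eq_one sq_T_one]

theorem sq_S : ∀ i, S (i + 1) ^ 2 = 1
  | 0 => sq_S_one
  | 1 => sq_S_two
  | i + 2 => by
    have h := congrArg shift (sq_S (i + 1))
    simp only [map_pow, shift_S, map_one] at h
    exact h

theorem sq_T : ∀ i, T (i + 1) ^ 2 = 1
  | 0 => sq_T_one
  | 1 => sq_T_two
  | i + 2 => by
    have h := congrArg shift (sq_T (i + 1))
    simp only [map_pow, shift_T, map_one] at h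
    exact h

theorem inv_S (i : ℕ) : (S (i + 1))⁻¹ = S (i + 1) := inv_eq_self_of_sq_eq_one (sq_S i)

theorem relC1 : ∀ i m, Commute (S (i + 1)) (X (m + i + 2))
  | 0, 0 => relC1_1_2
  | 0, 1 => relC1_1_3
  | 0, m + 2 => semiconjBy_X_add_two (relC1 0 m) (relC1 0 (m + 1))
  | 1, 0 => relC1_2_3
  | 1, 1 => relC1_2_4
  | 1, m + 2 => semiconjBy_X_add_two (relC1 1 m) (relC1 1 (m + 1))
  | i + 2, m => by
    have h := (relC1 (i + 1) m).map shift
    simp only [shift_S, shift_X] at h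
    exact h

theorem relC3 : ∀ j m, SemiconjBy (X j) (S (m + j + 3)) (S (m + j + 2))
  | 0, m => relC3_zero m
  | 1, 0 => relC3_3_1
  | 1, m + 1 => semiconjBy_S_add_two (relA 1 m) (relA 1 (m + 1)) (relC3 1 m)
  | j + 2, m => by
    have h := (relC3 (j + 1) m).map shift
    simp only [shift_S, shift_X] at h
    exact h

theorem relD1 : ∀ j m, SemiconjBy (X j) (T (m + j + 3)) (T (m + j + 2))
  | 0, m => relD1_zero m
  | 1, 0 => relD1_3_1
  | 1, m + 1 => semiconjBy_T_add_two (relA 1 m) (relC3 1 m) (relD1 1 m)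
  | j + 2, m => by
    have h := (relD1 (j + 1) m).map shift
    simp only [shift_T, shift_X] at h
    exact h

theorem relB1 : ∀ i m, Commute (S (i + 1)) (S (m + i + 3))
  | 0, 0 => relB1_1_3
  | 0, m + 1 => semiconjBy_S_add_two (relC1 0 m) (relC1 0 (m + 1)) (relB1 0 m)
  | 1, 0 => by
    rw [S_two_eq]
    exact (((relC3 0 1).inv_symm_left.mul_left (relB1 0 0)).mul_left (relC3 1 0)).mul_left
      (relB1 0 1)
  | 1, m + 1 => semiconjBy_S_add_two (relC1 1 m) (relC1 1 (m + 1)) (relB1 1 m)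
  | i + 2, m => by
    have h := (relB1 (i + 1) m).map shift
    simp only [shift_S] at h
    exact h

theorem relB3 : ∀ i m, Commute (S (i + 1)) (T (m + i + 3))
  | 0, 0 => relB3_1_3
  | 0, m + 1 => semiconjBy_T_add_two (relC1 0 m) (relB1 0 m) (relB3 0 m)
  | 1, 0 => by
    rw [S_two_eq]
    exact (((relD1 0 1).inv_symm_left.mul_left (relB3 0 0)).mul_left (relD1 1 0)).mul_left
      (relB3 0 1)
  | 1, m + 1 => semiconjBy_T_add_two (relC1 1 m) (relB1 1 m) (relB3 1 m)
  | i + 2, m => by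
    have h := (relB3 (i + 1) m).map shift
    simp only [shift_S, shift_T] at h
    exact h

theorem X_zero_mul_S_two (t : HV) : X 0 * (S 2 * t) = S 1 * (X 1 * (S 1 * t)) := by
  rw [S_two_eq]; group

theorem braid_S_one_two (t : HV) : S 1 * (S 2 * (S 1 * t)) = S 2 * (S 1 * (S 2 * t)) := by
  simp only [← mul_assoc, relB2_1]

theorem relB2_2 : S 2 * S 3 * S 2 = S 3 * S 2 * S 3 := by
  have e : ∀ t, X 1 * (S 3 * t) = S 2 * (X 2 * (S 2 * t)) := fun t => by
    rw [S_add_two 1, inv_S 1]; group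
  -- The tail `t` lets each relation be rewritten inside a right-nested product.
  suffices h : ∀ t, X 0 * (S 2 * (S 3 * (S 2 * t))) = X 0 * (S 3 * (S 2 * (S 3 * t))) by
    simpa only [mul_assoc, mul_one] using mul_left_cancel (h 1)
  intro t
  calc X 0 * (S 2 * (S 3 * (S 2 * t)))
      = S 1 * (S 2 * (X 2 * (S 2 * (S 1 * (S 2 * t))))) := by
        rw [X_zero_mul_S_two, (relB1 0 0).left_comm, e]
    _ = X 0 * (S 3 * (S 2 * (S 3 * t))) := by
        rw [mul_mul_eq_mul_mul (relC3 0 0).eq, X_zero_mul_S_two, (relB1 0 0).left_comm, e,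
          ← braid_S_one_two (X 2 * (S 2 * (S 1 * t))), (relC1 0 0).left_comm, braid_S_one_two]

theorem relB4_2 : S 2 * T 3 * S 2 = T 3 * S 2 * T 3 := by
  have e : ∀ t, X 1 * (T 3 * t) = T 2 * (S 2 * t) := fun t => by
    rw [T_add_two 1, inv_S 1]; group
  have braid : ∀ t, T 2 * (S 1 * (T 2 * t)) = S 1 * (T 2 * (S 1 * t)) := fun t => by
    simp only [← mul_assoc, relB4_1]
  suffices h : ∀ t, X 0 * (S 2 * (T 3 * (S 2 * t))) = X 0 * (T 3 * (S 2 * (T 3 * t))) by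
    simpa only [mul_assoc, mul_one] using mul_left_cancel (h 1)
  intro t
  calc X 0 * (S 2 * (T 3 * (S 2 * t)))
      = S 1 * (T 2 * (S 1 * (S 2 * (S 1 * t)))) := by
        rw [X_zero_mul_S_two, (relB3 0 0).left_comm, e, ← braid_S_one_two]
    _ = X 0 * (T 3 * (S 2 * (T 3 * t))) := by
        rw [mul_mul_eq_mul_mul (relD1 0 0).eq, X_zero_mul_S_two, (relB3 0 0).left_comm, e,
          braid]

theorem relB2 : ∀ i, S (i + 1) * S (i + 2) * S (i + 1) = S (i + 2) * S (i + 1) * S (i + 2)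
  | 0 => relB2_1
  | 1 => relB2_2
  | i + 2 => by
    have h := congrArg shift (relB2 (i + 1))
    simp only [map_mul, shift_S] at h
    exact h

theorem relB4 : ∀ i, S (i + 1) * T (i + 2) * S (i + 1) = T (i + 2) * S (i + 1) * T (i + 2)
  | 0 => relB4_1
  | 1 => relB4_2
  | i + 2 => by
    have h := congrArg shift (relB4 (i + 1))
    simp only [map_mul, shift_S, shift_T] at h
    exact h

theorem relC4 : ∀ i, S (i + 1) * X i = X (i + 1) * S (i + 1) * S (i + 2)
  | 0 => relC4_0
  | 1 => relC4_1
  | i + 2 => by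
    have h := congrArg shift (relC4 (i + 1))
    simp only [map_mul, shift_S, shift_X] at h
    exact h

theorem relD2 : ∀ i, T (i + 1) * X i = S (i + 1) * T (i + 2)
  | 0 => relD2_1
  | 1 => relD2_2
  | i + 2 => by
    have h := congrArg shift (relD2 (i + 1))
    simp only [map_mul, shift_S, shift_T, shift_X] at h
    exact h

theorem relC2 (i : ℕ) : S (i + 1) * X (i + 1) = X i * S (i + 2) * S (i + 1) := by
  rw [S_add_two]; group

theorem relD3 (i : ℕ) : T (i + 1) = X i * T (i + 2) * S (i + 1) := by
  rw [T_add_two]; group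

def toGV : HV →* GV :=
  PresentedGroup.toGroup (f := fun a => QuotientGroup.mk' vRelsCl (GBV.evalH (.of a))) <| by
    have hlift : FreeGroup.lift (fun a => QuotientGroup.mk' vRelsCl (GBV.evalH (.of a))) =
        (QuotientGroup.mk' vRelsCl).comp GBV.evalH :=
      FreeGroup.ext_hom _ _ fun _ => FreeGroup.lift_apply_of
    rintro r (hr | rfl | rfl) <;> rw [hlift, MonoidHom.comp_apply]
    · rw [GBV.evalH_hRels r hr, map_one]
    · rw [map_pow, GBV.evalH_sH 0, QuotientGroup.mk'_apply, QuotientGroup.eq_one_iff]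
      exact GBV.sg_sq_mem le_rfl
    · rw [map_pow, GBV.evalH_tH 0, QuotientGroup.mk'_apply, QuotientGroup.eq_one_iff]
      exact GBV.tg_sq_mem le_rfl

theorem toGV_of (a : HGen) :
    toGV (.of a) = QuotientGroup.mk' vRelsCl (GBV.evalH (.of a)) :=
  PresentedGroup.toGroup.of _

theorem toGV_mk (w : FreeGroup HGen) :
    toGV (mk w) = QuotientGroup.mk' vRelsCl (GBV.evalH w) := by
  have h : toGV.comp mk = (QuotientGroup.mk' vRelsCl).comp GBV.evalH :=
    FreeGroup.ext_hom _ _ toGV_of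
  exact DFunLike.congr_fun h w

def ofBVGen : BVGen → HV
  | .x i => X i
  | .s i => S (i + 1)
  | .t i => T (i + 1)

theorem lift_ofBVGen_X (i : ℕ) : FreeGroup.lift ofBVGen (BVGen.X i) = X i :=
  FreeGroup.lift_apply_of

theorem lift_ofBVGen_S (i : ℕ) : FreeGroup.lift ofBVGen (BVGen.S i) = S (i - 1 + 1) :=
  FreeGroup.lift_apply_of

theorem lift_ofBVGen_T (i : ℕ) : FreeGroup.lift ofBVGen (BVGen.T i) = T (i - 1 + 1) :=
  FreeGroup.lift_apply_of

theorem lift_ofBVGen_bvRels : ∀ r ∈ BVGen.bvRels, FreeGroup.lift ofBVGen r = 1 := by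
  rintro r (⟨i, j, hij, rfl⟩ | ⟨i, j, hi, hj, rfl⟩ | ⟨i, hi, rfl⟩ | ⟨i, j, hi, hj, rfl⟩ |
    ⟨i, hi, rfl⟩ | ⟨i, j, hi, hj, rfl⟩ | ⟨i, hi, rfl⟩ | ⟨i, j, hj, rfl⟩ | ⟨i, rfl⟩ |
    ⟨i, j, hj, rfl⟩ | ⟨i, hi, rfl⟩ | ⟨i, hi, rfl⟩) <;>
    simp only [grel, map_mul, map_inv, mul_inv_eq_one, lift_ofBVGen_X, lift_ofBVGen_S,
      lift_ofBVGen_T]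
  · obtain ⟨m, rfl⟩ : ∃ m, j = m + i + 1 := ⟨j - i - 1, by omega⟩
    exact (relA i m).eq.symm
  · obtain ⟨a, m, rfl, rfl⟩ : ∃ a m, i = a + 1 ∧ j = m + a + 3 := ⟨i - 1, j - i - 2, by omega⟩
    exact (relB1 a m).eq
  · obtain ⟨a, rfl⟩ : ∃ a, i = a + 1 := ⟨i - 1, by omega⟩
    exact relB2 a
  · obtain ⟨a, m, rfl, rfl⟩ : ∃ a m, i = a + 1 ∧ j = m + a + 3 := ⟨i - 1, j - i - 2, by omega⟩
    exact (relB3 a m).eq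
  · obtain ⟨a, rfl⟩ : ∃ a, i = a + 1 := ⟨i - 1, by omega⟩
    exact relB4 a
  · obtain ⟨a, m, rfl, rfl⟩ : ∃ a m, i = a + 1 ∧ j = m + a + 2 := ⟨i - 1, j - i - 1, by omega⟩
    exact (relC1 a m).eq
  · obtain ⟨a, rfl⟩ : ∃ a, i = a + 1 := ⟨i - 1, by omega⟩
    exact relC2 a
  · obtain ⟨m, rfl⟩ : ∃ m, i = m + j + 2 := ⟨i - j - 2, by omega⟩
    exact (relC3 j m).eq.symm
  · exact relC4 i
  · obtain ⟨m, rfl⟩ : ∃ m, i = m + j + 2 := ⟨i - j - 2, by omega⟩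
    exact (relD1 j m).eq.symm
  · obtain ⟨a, rfl⟩ : ∃ a, i = a + 1 := ⟨i - 1, by omega⟩
    exact relD2 a
  · obtain ⟨a, rfl⟩ : ∃ a, i = a + 1 := ⟨i - 1, by omega⟩
    exact relD3 a

def ofGBV : GBV →* HV := PresentedGroup.toGroup lift_ofBVGen_bvRels

theorem ofGBV_of (b : BVGen) : ofGBV (.of b) = ofBVGen b := PresentedGroup.toGroup.of _

theorem vRelsCl_le_ker_ofGBV : vRelsCl ≤ ofGBV.ker := by
  refine Subgroup.normalClosure_le_normal ?_
  rintro g ⟨i, hi, rfl | rfl⟩ <;> obtain ⟨m, rfl⟩ : ∃ m, i = m + 1 := ⟨i - 1, by omega⟩ <;>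
    rw [SetLike.mem_coe, MonoidHom.mem_ker, map_pow]
  exacts [(congrArg (· ^ 2) (ofGBV_of _)).trans (sq_S m),
    (congrArg (· ^ 2) (ofGBV_of _)).trans (sq_T m)]

def ofGV : GV →* HV := QuotientGroup.lift vRelsCl ofGBV vRelsCl_le_ker_ofGBV

theorem ofGV_mk (g : GBV) : ofGV (QuotientGroup.mk' vRelsCl g) = ofGBV g := rfl

theorem ofGV_comp_toGV : ofGV.comp toGV = MonoidHom.id HV :=
  PresentedGroup.ext fun a => by cases a <;> rfl

theorem toGV_comp_ofGV : toGV.comp ofGV = MonoidHom.id GV := by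
  refine QuotientGroup.monoidHom_ext _ (PresentedGroup.ext fun b => ?_)
  simp only [MonoidHom.comp_apply, MonoidHom.id_apply, ofGV_mk, ofGBV_of]
  cases b with
  | x i => exact (toGV_mk (xH i)).trans (congrArg _ (GBV.evalH_xH i))
  | s i => exact (toGV_mk (sH (i + 1))).trans (congrArg _ (GBV.evalH_sH i))
  | t i => exact (toGV_mk (tH (i + 1))).trans (congrArg _ (GBV.evalH_tH i))

def equivGV : HV ≃* GV := MonoidHom.toMulEquiv toGV ofGV ofGV_comp_toGV toGV_comp_ofGV

end HV

/-- There is a group isomorphism `H_V ≃ G_V` sending `x₀ ↦ x₀`, `x₁ ↦ x₁`,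
`σ₁ ↦ σ₁`, `τ₁ ↦ τ₁`; hence Thompson's group `V` admits a presentation with
4 generators and 20 relators. -/
theorem hv_iso_v :
    ∃ e : HV ≃* GV,
      e (PresentedGroup.of HGen.x0) = QuotientGroup.mk' vRelsCl (GBV.xg 0) ∧
      e (PresentedGroup.of HGen.x1) = QuotientGroup.mk' vRelsCl (GBV.xg 1) ∧
      e (PresentedGroup.of HGen.s1) = QuotientGroup.mk' vRelsCl (GBV.sg 1) ∧
      e (PresentedGroup.of HGen.t1) = QuotientGroup.mk' vRelsCl (GBV.tg 1) :=
  ⟨HV.equivGV, HV.toGV_of _, HV.toGV_of _, HV.toGV_of _, HV.toGV_of _⟩
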